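/- Let p ≥ 2, t ≥ 0 and 1 ≤ b ≤ p-1 be integers and let e = ⟨t,t+1;b⟩. If e' ∈ ℤ^{p-1} satisfies Σ_{i=1}^{p-1} e'_i = (p-1)t + b + r·p² for some integer r ≥ 1, then Q(e') < Q(e). -/
import Mathlib


/-- The quadratic form `Q` on `ℚ^{p-1}`, the intersection form of
`H₂(C_p, ∂C_p; ℚ)` in the basis `δ_1,…,δ_{p-1}`. -/
def Qform (p : ℕ) (x : Fin (p-1) → ℚ) : ℚ :=
  -(((p : ℚ)^2 - p - 1) / (p : ℚ)^2) * ∑ i, (x i)^2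
    + (2 * ((p : ℚ) + 1) / (p : ℚ)^2) * ∑ i, ∑ j, (if i < j then x i * x j else 0)

/-- The vector `⟨t,t+1;b⟩ ∈ ℤ^{p-1}`: the first `p-1-b` coordinates equal `t`,
the last `b` coordinates equal `t+1`. -/
def vecTB (p t b : ℕ) : Fin (p-1) → ℚ :=
  fun i => if (i : ℕ) < p - 1 - b then (t : ℚ) else (t : ℚ) + 1

lemma sum_ite_lt_const (n c : ℕ) (hc : c ≤ n) (a d : ℚ) :
    ∑ i : Fin n, (if (i:ℕ) < c then a else d) = c * a + ((n - c : ℕ) : ℚ) * d := by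
  rw [Fin.sum_univ_eq_sum_range (fun k => if k < c then a else d) n, Finset.range_eq_Ico,
    ← Finset.sum_Ico_consecutive _ (Nat.zero_le c) hc]
  have h1 : ∑ i ∈ Finset.Ico 0 c, (if i < c then a else d) = c * a := by
    rw [Finset.sum_congr rfl (fun i hi => if_pos (Finset.mem_Ico.mp hi).2)]
    simp [mul_comm]
  have h2 : ∑ i ∈ Finset.Ico c n, (if i < c then a else d) = ((n - c : ℕ) : ℚ) * d := by
    rw [Finset.sum_congr rfl (fun i hi => if_neg (by
      exact Nat.not_lt.mpr (Finset.mem_Ico.mp hi).1))]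
    simp [Nat.card_Ico, mul_comm]
  rw [h1, h2]

lemma offdiag_eq (n : ℕ) (x : Fin n → ℚ) :
    2 * (∑ i, ∑ j, if i < j then x i * x j else 0) = (∑ i, x i)^2 - ∑ i, (x i)^2 := by
  have h : (∑ i, x i)^2 = ∑ i : Fin n, ∑ j : Fin n, x i * x j := by
    rw [sq, Finset.sum_mul_sum]
  have hsplit : ∀ i j : Fin n, x i * x j =
      (if i < j then x i * x j else 0) + (if j < i then x i * x j else 0) +
        (if i = j then x i * x j else 0) := by
    intro i j
    rcases lt_trichotomy i j with hij | hij | hij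
    · simp [hij, asymm hij, ne_of_lt hij]
    · simp [hij]
    · simp [hij, asymm hij, (ne_of_lt hij).symm]
  have h2 : ∑ i : Fin n, ∑ j : Fin n, x i * x j =
      (∑ i, ∑ j, if i < j then x i * x j else 0) +
      (∑ i, ∑ j, if j < i then x i * x j else 0) +
      (∑ i, (x i)^2) := by
    calc ∑ i : Fin n, ∑ j : Fin n, x i * x j
        = ∑ i : Fin n, ∑ j : Fin n, ((if i < j then x i * x j else 0) +
            (if j < i then x i * x j else 0) + (if i = j then x i * x j else 0)) := by
          exact Finset.sum_congr rfl fun i _ => Finset.sum_congr rfl fun j _ => hsplit i j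
      _ = (∑ i, ∑ j, if i < j then x i * x j else 0) +
          (∑ i, ∑ j, if j < i then x i * x j else 0) +
          (∑ i : Fin n, ∑ j : Fin n, if i = j then x i * x j else 0) := by
          simp [Finset.sum_add_distrib]
      _ = _ := by
          congr 1
          refine Finset.sum_congr rfl fun i _ => ?_
          simp [Finset.sum_ite_eq, sq]
  have h3 : (∑ i, ∑ j, if j < i then x i * x j else 0) =
      (∑ i, ∑ j, if i < j then x i * x j else 0) := by
    rw [Finset.sum_comm]
    exact Finset.sum_congr rfl fun i _ => Finset.sum_congr rfl fun j _ => by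
      rcases lt_or_ge i j with h | h <;> simp [h, mul_comm] <;> simp [Nat.not_lt.mpr, le_of_lt]
  linarith [h, h2, h3]

lemma Qform_eq (p : ℕ) (hp : 2 ≤ p) (x : Fin (p-1) → ℚ) :
    Qform p x = (((p:ℚ)+1) * (∑ i, x i)^2 - (p:ℚ)^2 * ∑ i, (x i)^2) / (p:ℚ)^2 := by
  have hP : (p:ℚ) ≠ 0 := by
    have : (0:ℚ) < p := by exact_mod_cast Nat.lt_of_lt_of_le Nat.zero_lt_two hp
    linarith
  have hoff := offdiag_eq (p-1) x
  unfold Qform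
  field_simp
  linear_combination ((p:ℚ)+1) * hoff

set_option maxHeartbeats 1000000 in
/-- if `e' ∈ ℤ^{p-1}` has coordinate sum `(p-1)t + b + r·p²` for some
integer `r ≥ 1`, then `Q(e') < Q(⟨t,t+1;b⟩)`. -/
theorem stmt_7 (p t b : ℕ) (hp : 2 ≤ p) (hb1 : 1 ≤ b) (hb2 : b ≤ p - 1)
    (e' : Fin (p-1) → ℤ) (r : ℤ) (hr : 1 ≤ r)
    (hsum : ∑ i, e' i = ((p : ℤ) - 1) * t + b + r * (p : ℤ)^2) :
    Qform p (fun i => (e' i : ℚ)) < Qform p (vecTB p t b) := by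
  set P : ℚ := (p : ℚ) with hPdef
  have hP2 : (2:ℚ) ≤ P := by rw [hPdef]; exact_mod_cast hp
  have hP2pos : (0:ℚ) < P^2 := by positivity
  have hb1' : (1:ℚ) ≤ (b:ℚ) := by exact_mod_cast hb1
  have hb2' : (b:ℚ) ≤ P - 1 := by
    have := (Nat.cast_le (α := ℚ)).mpr hb2
    rwa [Nat.cast_sub (by omega), Nat.cast_one] at this
  have ht : (0:ℚ) ≤ (t:ℚ) := Nat.cast_nonneg t
  have hr' : (1:ℚ) ≤ (r:ℚ) := by exact_mod_cast hr
  -- sums for vecTB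
  have hcast1 : ((p - 1 - b : ℕ) : ℚ) = P - 1 - b := by
    rw [Nat.cast_sub hb2, Nat.cast_sub (by omega), Nat.cast_one]
  have hcast2 : ((p - 1 - (p - 1 - b) : ℕ) : ℚ) = (b:ℚ) := by
    congr 1; omega
  have hSe : ∑ i, vecTB p t b i = (P - 1) * t + b := by
    unfold vecTB
    rw [sum_ite_lt_const (p-1) (p-1-b) (by omega) (t:ℚ) ((t:ℚ)+1), hcast1, hcast2]
    ring
  have hTe : ∑ i, (vecTB p t b i)^2 = (P - 1) * t^2 + 2*b*t + b := by
    have h1 : ∀ i : Fin (p-1), (vecTB p t b i)^2 =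
        if (i : ℕ) < p - 1 - b then ((t:ℚ)^2) else ((t:ℚ)^2 + 2*t + 1) := by
      intro i; unfold vecTB; split <;> ring
    rw [Finset.sum_congr rfl fun i _ => h1 i,
      sum_ite_lt_const (p-1) (p-1-b) (by omega) ((t:ℚ)^2) ((t:ℚ)^2 + 2*t + 1),
      hcast1, hcast2]
    ring
  -- sum for e'
  have hS' : ∑ i, ((e' i : ℚ)) = (P - 1) * t + b + r * P^2 := by
    have : ((∑ i, e' i : ℤ) : ℚ) = (P - 1) * t + b + r * P^2 := by
      rw [hsum]; push_cast; ring
    rw [← this]; push_cast; ring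
  -- Cauchy-Schwarz
  have hCS : (∑ i, ((e' i : ℚ)))^2 ≤ (P - 1) * ∑ i, ((e' i : ℚ))^2 := by
    have h := sq_sum_le_card_mul_sum_sq (s := (Finset.univ : Finset (Fin (p-1))))
      (f := fun i => (e' i : ℚ))
    simpa [Finset.card_univ, Nat.cast_sub (show 1 ≤ p by omega)] using h
  rw [Qform_eq p hp, Qform_eq p hp, div_lt_div_iff₀ hP2pos hP2pos, hSe, hTe, hS']
  set T' : ℚ := ∑ i, ((e' i : ℚ))^2 with hT'def
  set Se : ℚ := (P - 1) * t + b with hSedef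
  set S' : ℚ := Se + (r:ℚ) * P^2 with hS'def
  have hCS' : S'^2 ≤ (P - 1) * T' := by rw [← hS']; exact hCS
  have hSepos : (0:ℚ) < Se := by
    have h0 : (0:ℚ) ≤ (P-1) * t := mul_nonneg (by linarith) ht
    rw [hSedef]; linarith
  have hbb : (b:ℚ) * (P - 1 - b) ≤ (P-1)^2 := by nlinarith
  have hr2 : (0:ℚ) ≤ (r:ℚ)^2 - 1 := by nlinarith
  have hkey : Se^2 + P^2 * ((b:ℚ) * (P - 1 - b)) < (Se + (r:ℚ) * P^2)^2 := by
    nlinarith [mul_le_mul_of_nonneg_left hbb (le_of_lt hP2pos),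
      mul_pos hP2pos hSepos,
      mul_nonneg (mul_nonneg (by linarith : (0:ℚ) ≤ (r:ℚ) - 1) (le_of_lt hP2pos)) (le_of_lt hSepos),
      mul_nonneg (mul_nonneg hr2 (le_of_lt hP2pos)) (le_of_lt hP2pos),
      mul_pos hP2pos (show (0:ℚ) < 2*P - 1 by linarith)]
  have hkey' : Se^2 + P^2 * ((b:ℚ) * (P - 1 - b)) < S'^2 := by rw [hS'def]; exact hkey
  have hA := mul_le_mul_of_nonneg_left hCS' (le_of_lt hP2pos)
  have hTeid2 : P^2 * ((P - 1) * ((P - 1) * t^2 + 2*b*t + b)) =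
      P^2 * Se^2 + P^2 * ((b:ℚ) * (P - 1 - b)) := by rw [hSedef]; ring
  have hmain : (P - 1) * ((P+1) * S'^2 - P^2 * T') <
      (P - 1) * ((P+1) * Se^2 - P^2 * ((P - 1) * t^2 + 2*b*t + b)) := by
    nlinarith [hA, hkey', hTeid2]
  have hstrip := (mul_lt_mul_iff_right₀ (by linarith : (0:ℚ) < P - 1)).mp hmain
  calc ((P+1) * (Se + r*P^2)^2 - P^2 * T') * P^2
      = ((P+1) * S'^2 - P^2 * T') * P^2 := by rw [hS'def]
    _ < ((P+1) * Se^2 - P^2 * ((P - 1) * t^2 + 2*b*t + b)) * P^2 :=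
        mul_lt_mul_of_pos_right hstrip hP2pos
    _ = ((P+1) * ((P-1)*t + b)^2 - P^2 * ((P - 1) * t^2 + 2*b*t + b)) * P^2 := by rw [hSedef]
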